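/- Let p_t(y) = (2πt)^{−1/2} e^{−y²/(2t)} for t > 0, y ∈ ℝ, and define Q : ((0,∞) × ℝ)² → ℝ by Q((s,x),(t,y)) = ∫₀^{s∧t} p_{s+t−2r}(x − y) dr. For s, t > 0 and x, y ∈ ℝ define V(s,t,x,y) = Q((s,x),(s,x)) + Q((t,x),(t,x)) + Q((s,y),(s,y)) + Q((t,y),(t,y)) − 2Q((s,x),(t,x)) − 2Q((s,x),(s,y)) + 2Q((s,x),(t,y)) + 2Q((t,x),(s,y)) − 2Q((t,x),(t,y)) − 2Q((s,y),(t,y)). Then V(s,t,x,y) = ∫_{s+t}^{2(s∨t)} [p_r(0) − p_r(x−y)] dr − ∫_{2(s∧t)}^{s+t} [p_r(0) − p_r(x−y)] dr + 2∫₀^{|s−t|} [p_r(0) − p_r(x−y)] dr. -/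
import Mathlib


open MeasureTheory Set intervalIntegral

/-- One-dimensional heat kernel `p_t(y) = (2πt)^{−1/2} e^{−y²/(2t)}`. -/
noncomputable def heatK (t y : ℝ) : ℝ :=
  (Real.sqrt (2 * Real.pi * t))⁻¹ * Real.exp (-y ^ 2 / (2 * t))

lemma heatK_nonneg (t y : ℝ) : 0 ≤ heatK t y := by
  unfold heatK; positivity

lemma heatK_integrableOn (z b : ℝ) :
    IntegrableOn (fun r => heatK r z) (Ioc 0 b) := by
  have hg : IntegrableOn (fun r : ℝ => (Real.sqrt (2*Real.pi))⁻¹ * r ^ (-(1/2):ℝ)) (Ioc 0 b) :=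
    ((intervalIntegrable_rpow' (a := 0) (b := b) (r := -(1/2)) (by norm_num)).1).const_mul _
  refine Integrable.mono hg ?_ ?_
  · apply Measurable.aestronglyMeasurable
    unfold heatK
    fun_prop
  · refine (Filter.eventually_of_mem (self_mem_ae_restrict measurableSet_Ioc) ?_)
    intro r hr
    have hr0 : 0 < r := hr.1
    have h1 : Real.sqrt (2*Real.pi*r) = Real.sqrt (2*Real.pi) * Real.sqrt r := by
      rw [Real.sqrt_mul (by positivity)]
    have h2 : (r : ℝ) ^ (-(1/2):ℝ) = (Real.sqrt r)⁻¹ := by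
      rw [Real.rpow_neg hr0.le, Real.sqrt_eq_rpow]
    rw [Real.norm_eq_abs, Real.norm_eq_abs, abs_of_nonneg (heatK_nonneg _ _),
      abs_of_nonneg (by positivity)]
    calc heatK r z ≤ (Real.sqrt (2*Real.pi*r))⁻¹ * 1 := by
          unfold heatK
          gcongr
          exact Real.exp_le_one_iff.mpr
            (div_nonpos_iff.mpr (Or.inr ⟨neg_nonpos.mpr (sq_nonneg z), by positivity⟩))
      _ = (Real.sqrt (2*Real.pi))⁻¹ * r ^ (-(1/2):ℝ) := by
          rw [mul_one, h1, h2, mul_inv]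

lemma heatK_intInt (z : ℝ) {a b : ℝ} (ha : 0 ≤ a) (hab : a ≤ b) :
    IntervalIntegrable (fun r => heatK r z) volume a b := by
  rw [intervalIntegrable_iff_integrableOn_Ioc_of_le hab]
  exact (heatK_integrableOn z b).mono_set (Ioc_subset_Ioc ha le_rfl)

/-- Covariance `Q((s,x),(t,y)) = ∫₀^{s∧t} p_{s+t−2r}(x−y) dr` of the mild solution of
the stochastic heat equation with additive space-time white noise. -/
noncomputable def heatQ (s x t y : ℝ) : ℝ :=
  ∫ r in Set.Ioc (0:ℝ) (min s t), heatK (s + t - 2 * r) (x - y)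

/-- Second moment `V(s,t,x,y) = E[(u(t,y) − u(t,x) − u(s,y) + u(s,x))²]` of the
rectangular increment, expressed through the covariance `Q`. -/
noncomputable def heatV (s t x y : ℝ) : ℝ :=
  heatQ s x s x + heatQ t x t x + heatQ s y s y + heatQ t y t y
    - 2 * heatQ s x t x - 2 * heatQ s x s y + 2 * heatQ s x t y
    + 2 * heatQ t x s y - 2 * heatQ t x t y - 2 * heatQ s y t y

lemma heatQ_eq (s x t y : ℝ) (hs : 0 < s) (ht : 0 < t) :
    heatQ s x t y = 2⁻¹ * ∫ r in (s + t - 2 * min s t)..(s + t), heatK r (x - y) := by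
  have h0 : (0:ℝ) ≤ min s t := le_min hs.le ht.le
  rw [heatQ, ← intervalIntegral.integral_of_le h0]
  have h := intervalIntegral.integral_comp_add_mul (f := fun r => heatK r (x - y))
      (a := (0:ℝ)) (b := min s t) (c := (-2:ℝ)) (by norm_num) (s + t)
  simp only [mul_zero, add_zero] at h
  calc ∫ r in (0:ℝ)..min s t, heatK (s + t - 2 * r) (x - y)
      = ∫ r in (0:ℝ)..min s t, heatK (s + t + -2 * r) (x - y) := by
        refine intervalIntegral.integral_congr fun r _ => ?_
        congr 1; ring
    _ = (-2:ℝ)⁻¹ • ∫ r in (s+t)..(s + t + -2 * min s t), heatK r (x - y) := h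
    _ = 2⁻¹ * ∫ r in (s + t - 2 * min s t)..(s + t), heatK r (x - y) := by
        rw [show s + t + -2 * min s t = s + t - 2 * min s t by ring,
          intervalIntegral.integral_symm, smul_eq_mul]
        ring

lemma heatV_decomp_le (s t x y : ℝ) (hs : 0 < s) (hst : s ≤ t) :
    heatV s t x y =
      (∫ r in Ioc (s + t) (2 * max s t), (heatK r 0 - heatK r (x - y)))
        - (∫ r in Ioc (2 * min s t) (s + t), (heatK r 0 - heatK r (x - y)))
        + 2 * ∫ r in Ioc (0:ℝ) (|s - t|), (heatK r 0 - heatK r (x - y)) := by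
  have ht : 0 < t := hs.trans_le hst
  have hmin : min s t = s := min_eq_left hst
  have hmax : max s t = t := max_eq_right hst
  have habs : |s - t| = t - s := by rw [abs_sub_comm]; exact abs_of_nonneg (by linarith)
  have hd0 : (0:ℝ) ≤ t - s := by linarith
  have h1 : s + t ≤ 2 * t := by linarith
  have h2 : 2 * s ≤ s + t := by linarith
  have h3 : t - s ≤ s + t := by linarith
  have hst0 : (0:ℝ) ≤ s + t := by linarith
  have h2s0 : (0:ℝ) ≤ 2 * s := by linarith
  have h2t0 : (0:ℝ) ≤ 2 * t := by linarith
  -- rewrite the heatQ terms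
  have hQ1 : heatQ s x s x = 2⁻¹ * ∫ r in (0:ℝ)..(2*s), heatK r 0 := by
    rw [heatQ_eq s x s x hs hs, min_self, sub_self,
      show s + s - 2 * s = 0 by ring, show s + s = 2 * s by ring]
  have hQ2 : heatQ t x t x = 2⁻¹ * ∫ r in (0:ℝ)..(2*t), heatK r 0 := by
    rw [heatQ_eq t x t x ht ht, min_self, sub_self,
      show t + t - 2 * t = 0 by ring, show t + t = 2 * t by ring]
  have hQ3 : heatQ s y s y = 2⁻¹ * ∫ r in (0:ℝ)..(2*s), heatK r 0 := by
    rw [heatQ_eq s y s y hs hs, min_self, sub_self,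
      show s + s - 2 * s = 0 by ring, show s + s = 2 * s by ring]
  have hQ4 : heatQ t y t y = 2⁻¹ * ∫ r in (0:ℝ)..(2*t), heatK r 0 := by
    rw [heatQ_eq t y t y ht ht, min_self, sub_self,
      show t + t - 2 * t = 0 by ring, show t + t = 2 * t by ring]
  have hQ5 : heatQ s x t x = 2⁻¹ * ∫ r in (t-s)..(s+t), heatK r 0 := by
    rw [heatQ_eq s x t x hs ht, hmin, sub_self, show s + t - 2 * s = t - s by ring]
  have hQ6 : heatQ s x s y = 2⁻¹ * ∫ r in (0:ℝ)..(2*s), heatK r (x - y) := by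
    rw [heatQ_eq s x s y hs hs, min_self,
      show s + s - 2 * s = 0 by ring, show s + s = 2 * s by ring]
  have hQ7 : heatQ s x t y = 2⁻¹ * ∫ r in (t-s)..(s+t), heatK r (x - y) := by
    rw [heatQ_eq s x t y hs ht, hmin, show s + t - 2 * s = t - s by ring]
  have hQ8 : heatQ t x s y = 2⁻¹ * ∫ r in (t-s)..(s+t), heatK r (x - y) := by
    rw [heatQ_eq t x s y ht hs, min_eq_right hst,
      show t + s - 2 * s = t - s by ring, show t + s = s + t by ring]
  have hQ9 : heatQ t x t y = 2⁻¹ * ∫ r in (0:ℝ)..(2*t), heatK r (x - y) := by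
    rw [heatQ_eq t x t y ht ht, min_self,
      show t + t - 2 * t = 0 by ring, show t + t = 2 * t by ring]
  have hQ10 : heatQ s y t y = 2⁻¹ * ∫ r in (t-s)..(s+t), heatK r 0 := by
    rw [heatQ_eq s y t y hs ht, hmin, sub_self, show s + t - 2 * s = t - s by ring]
  -- rewrite RHS Ioc integrals
  have hR1 : (∫ r in Ioc (s + t) (2 * max s t), (heatK r 0 - heatK r (x - y)))
      = (∫ r in (s+t)..(2*t), heatK r 0) - ∫ r in (s+t)..(2*t), heatK r (x - y) := by
    rw [hmax, ← intervalIntegral.integral_of_le h1,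
      intervalIntegral.integral_sub (heatK_intInt 0 hst0 h1) (heatK_intInt (x-y) hst0 h1)]
  have hR2 : (∫ r in Ioc (2 * min s t) (s + t), (heatK r 0 - heatK r (x - y)))
      = (∫ r in (2*s)..(s+t), heatK r 0) - ∫ r in (2*s)..(s+t), heatK r (x - y) := by
    rw [hmin, ← intervalIntegral.integral_of_le h2,
      intervalIntegral.integral_sub (heatK_intInt 0 h2s0 h2) (heatK_intInt (x-y) h2s0 h2)]
  have hR3 : (∫ r in Ioc (0:ℝ) (|s - t|), (heatK r 0 - heatK r (x - y)))
      = (∫ r in (0:ℝ)..(t-s), heatK r 0) - ∫ r in (0:ℝ)..(t-s), heatK r (x - y) := by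
    rw [habs, ← intervalIntegral.integral_of_le hd0,
      intervalIntegral.integral_sub (heatK_intInt 0 le_rfl hd0) (heatK_intInt (x-y) le_rfl hd0)]
  -- adjacency
  have a1 : (∫ r in (0:ℝ)..(t-s), heatK r 0) + (∫ r in (t-s)..(s+t), heatK r 0)
      = ∫ r in (0:ℝ)..(s+t), heatK r 0 :=
    intervalIntegral.integral_add_adjacent_intervals
      (heatK_intInt 0 le_rfl hd0) (heatK_intInt 0 hd0 h3)
  have a2 : (∫ r in (0:ℝ)..(2*s), heatK r 0) + (∫ r in (2*s)..(s+t), heatK r 0)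
      = ∫ r in (0:ℝ)..(s+t), heatK r 0 :=
    intervalIntegral.integral_add_adjacent_intervals
      (heatK_intInt 0 le_rfl h2s0) (heatK_intInt 0 h2s0 h2)
  have a3 : (∫ r in (0:ℝ)..(s+t), heatK r 0) + (∫ r in (s+t)..(2*t), heatK r 0)
      = ∫ r in (0:ℝ)..(2*t), heatK r 0 :=
    intervalIntegral.integral_add_adjacent_intervals
      (heatK_intInt 0 le_rfl hst0) (heatK_intInt 0 hst0 h1)
  have b1 : (∫ r in (0:ℝ)..(t-s), heatK r (x-y)) + (∫ r in (t-s)..(s+t), heatK r (x-y))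
      = ∫ r in (0:ℝ)..(s+t), heatK r (x-y) :=
    intervalIntegral.integral_add_adjacent_intervals
      (heatK_intInt (x-y) le_rfl hd0) (heatK_intInt (x-y) hd0 h3)
  have b2 : (∫ r in (0:ℝ)..(2*s), heatK r (x-y)) + (∫ r in (2*s)..(s+t), heatK r (x-y))
      = ∫ r in (0:ℝ)..(s+t), heatK r (x-y) :=
    intervalIntegral.integral_add_adjacent_intervals
      (heatK_intInt (x-y) le_rfl h2s0) (heatK_intInt (x-y) h2s0 h2)
  have b3 : (∫ r in (0:ℝ)..(s+t), heatK r (x-y)) + (∫ r in (s+t)..(2*t), heatK r (x-y))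
      = ∫ r in (0:ℝ)..(2*t), heatK r (x-y) :=
    intervalIntegral.integral_add_adjacent_intervals
      (heatK_intInt (x-y) le_rfl hst0) (heatK_intInt (x-y) hst0 h1)
  rw [heatV, hQ1, hQ2, hQ3, hQ4, hQ5, hQ6, hQ7, hQ8, hQ9, hQ10, hR1, hR2, hR3]
  linarith

lemma heatQ_symm (s x t y : ℝ) : heatQ s x t y = heatQ t x s y := by
  unfold heatQ
  rw [min_comm, add_comm s t]

lemma heatV_symm (s t x y : ℝ) : heatV s t x y = heatV t s x y := by
  unfold heatV
  rw [heatQ_symm s x t x, heatQ_symm s x t y, heatQ_symm s y t y]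
  ring

/-- **Decomposition of the increment variance for the stochastic heat equation.**
For `s, t > 0` and `x, y ∈ ℝ`,
`V(s,t,x,y) = ∫_{s+t}^{2(s∨t)} [p_r(0) − p_r(x−y)] dr − ∫_{2(s∧t)}^{s+t} [p_r(0) − p_r(x−y)] dr
+ 2∫₀^{|s−t|} [p_r(0) − p_r(x−y)] dr`. -/
theorem heatV_decomposition (s t x y : ℝ) (hs : 0 < s) (ht : 0 < t) :
    heatV s t x y =
      (∫ r in Ioc (s + t) (2 * max s t), (heatK r 0 - heatK r (x - y)))
        - (∫ r in Ioc (2 * min s t) (s + t), (heatK r 0 - heatK r (x - y)))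
        + 2 * ∫ r in Ioc (0:ℝ) (|s - t|), (heatK r 0 - heatK r (x - y)) := by
  rcases le_total s t with h | h
  · exact heatV_decomp_le s t x y hs h
  · rw [heatV_symm, min_comm, max_comm, add_comm s t, abs_sub_comm]
    exact heatV_decomp_le t s x y ht h
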